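/- If f = f₁ + ρ f₂ belongs to E^ω with f₁, f₂ analytic near the origin of ℝ³ and f is nonvanishing on a neighbourhood of the origin, then 1/f belongs to E^ω (on a possibly smaller neighbourhood). -/

import Mathlib

open scoped Topology

def Eomega (f : EuclideanSpace ℝ (Fin 3) → ℝ) : Prop :=
  ∃ f₁ f₂ : EuclideanSpace ℝ (Fin 3) → ℝ,
    AnalyticAt ℝ f₁ 0 ∧ AnalyticAt ℝ f₂ 0 ∧
    ∀ᶠ x in 𝓝 (0 : EuclideanSpace ℝ (Fin 3)), f x = f₁ x + ‖x‖ * f₂ x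

/-!
Rationalise the denominator: `1 / (f₁ + ρ f₂) = (f₁ - ρ f₂) / (f₁² - ρ² f₂²)`. Since `ρ² = ‖x‖²`
is analytic, so is the new denominator, and at the origin it equals `f₁(0)² = f(0)² ≠ 0`.
-/

lemma inv_add_mul_eq_div_sub {K : Type*} [Field K] {a b r : K} (h : a ^ 2 - r ^ 2 * b ^ 2 ≠ 0) :
    (a + r * b)⁻¹ = a / (a ^ 2 - r ^ 2 * b ^ 2) + r * (-b / (a ^ 2 - r ^ 2 * b ^ 2)) := by
  have hab : a + r * b ≠ 0 := fun h' => h (by linear_combination (a - r * b) * h')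
  field_simp
  ring

section InnerProductSpace

variable {E : Type*} [NormedAddCommGroup E] [InnerProductSpace ℝ E]

lemma analyticAt_norm_sq (x₀ : E) : AnalyticAt ℝ (fun x : E => ‖x‖ ^ 2) x₀ := by
  have hinner : AnalyticAt ℝ (fun p : E × E => innerSL ℝ p.1 p.2) (x₀, x₀) :=
    (innerSL ℝ).analyticAt_bilinear (x₀, x₀)
  have hdiag : AnalyticAt ℝ (fun x : E => (x, x)) x₀ := analyticAt_id.prod analyticAt_id
  refine (hinner.comp (f := fun x : E => (x, x)) hdiag).congr (Filter.Eventually.of_forall fun x => ?_)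
  simp only [Function.comp_apply, innerSL_apply_apply, real_inner_self_eq_norm_sq]

lemma exists_analyticAt_inv_add_norm_mul {f₁ f₂ : E → ℝ} {x₀ : E}
    (h₁ : AnalyticAt ℝ f₁ x₀) (h₂ : AnalyticAt ℝ f₂ x₀)
    (h₀ : f₁ x₀ ^ 2 - ‖x₀‖ ^ 2 * f₂ x₀ ^ 2 ≠ 0) :
    ∃ g₁ g₂ : E → ℝ, AnalyticAt ℝ g₁ x₀ ∧ AnalyticAt ℝ g₂ x₀ ∧
      ∀ᶠ x in 𝓝 x₀, (f₁ x + ‖x‖ * f₂ x)⁻¹ = g₁ x + ‖x‖ * g₂ x := by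
  set d : E → ℝ := fun x => f₁ x ^ 2 - ‖x‖ ^ 2 * f₂ x ^ 2
  have hd : AnalyticAt ℝ d x₀ := (h₁.pow 2).sub ((analyticAt_norm_sq x₀).mul (h₂.pow 2))
  refine ⟨fun x => f₁ x / d x, fun x => -f₂ x / d x, h₁.div hd h₀, h₂.neg.div hd h₀, ?_⟩
  filter_upwards [hd.continuousAt.eventually_ne h₀] with x hx
  exact inv_add_mul_eq_div_sub hx

end InnerProductSpace

theorem Eomega_inv (f : EuclideanSpace ℝ (Fin 3) → ℝ)
    (hf : Eomega f)
    (hne : ∀ᶠ x in 𝓝 (0 : EuclideanSpace ℝ (Fin 3)), f x ≠ 0) :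
    Eomega (fun x => (f x)⁻¹) := by
  obtain ⟨f₁, f₂, h₁, h₂, hf_eq⟩ := hf
  have hf₁ : f₁ 0 ≠ 0 := by simpa [hf_eq.self_of_nhds] using hne.self_of_nhds
  obtain ⟨g₁, g₂, hg₁, hg₂, hg_eq⟩ :=
    exists_analyticAt_inv_add_norm_mul h₁ h₂ (by simpa using hf₁)
  refine ⟨g₁, g₂, hg₁, hg₂, ?_⟩
  filter_upwards [hf_eq, hg_eq] with x hfx hgx
  rw [hfx, hgx]
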